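/- arXiv:1507.05373 — 4 statements merged into one kernel-verified Lean document; each statement's English description precedes it below -/
import Mathlib

section
/- Define b(n) = (n+4)(20√(10(n+3)(n+6)) + (n+3)(n+6)(n²+9n-12)) / (20(2(n-2)(n+6) + (n+4)√(10(n+3)(n+6)))). Then for every integer n ≥ 37, b(n) > n(n+1)/2. -/
/-- For `n ≥ 37`, the Fisher-type bound `b_{n,6}` exceeds `n(n+1)/2`. -/
theorem b_n6_gt (n : ℕ) (hn : 37 ≤ n) :
    ((n : ℝ) + 4) * (20 * Real.sqrt (10 * ((n : ℝ) + 3) * ((n : ℝ) + 6))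
        + ((n : ℝ) + 3) * ((n : ℝ) + 6) * ((n : ℝ) ^ 2 + 9 * (n : ℝ) - 12))
      / (20 * (2 * ((n : ℝ) - 2) * ((n : ℝ) + 6)
        + ((n : ℝ) + 4) * Real.sqrt (10 * ((n : ℝ) + 3) * ((n : ℝ) + 6))))
      > (n : ℝ) * ((n : ℝ) + 1) / 2 := by
  set x : ℝ := (n : ℝ) with hxdef
  have hx : (37 : ℝ) ≤ x := by
    rw [hxdef]; exact_mod_cast hn
  set s : ℝ := Real.sqrt (10 * (x + 3) * (x + 6)) with hsdef
  have harg : (0 : ℝ) ≤ 10 * (x + 3) * (x + 6) := by nlinarith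
  have hs0 : 0 ≤ s := Real.sqrt_nonneg _
  have hs2 : s ^ 2 = 10 * (x + 3) * (x + 6) := Real.sq_sqrt harg
  have hsle : s ≤ 3163 / 1000 * (x + 9 / 2) := by
    nlinarith [hs2, hs0, hx, sq_nonneg (s - 3163 / 1000 * (x + 9 / 2))]
  have hden : 0 < 20 * (2 * (x - 2) * (x + 6) + (x + 4) * s) := by nlinarith
  rw [gt_iff_lt, div_lt_div_iff₀ (by norm_num) hden]
  have hcoef : (0 : ℝ) ≤ (20 * x ^ 2 + 20 * x - 40) * (x + 4) := by nlinarith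
  have hs' : (20 * x ^ 2 + 20 * x - 40) * (x + 4) * s
      ≤ (20 * x ^ 2 + 20 * x - 40) * (x + 4) * (3163 / 1000 * (x + 9 / 2)) :=
    mul_le_mul_of_nonneg_left hsle hcoef
  have h37 : (0 : ℝ) ≤ x - 37 := by linarith
  nlinarith [hs', pow_nonneg h37 2, pow_nonneg h37 3, pow_nonneg h37 4,
    pow_nonneg h37 5, h37]
end

section
/- With b(n) = (n+4)(20√(10(n+3)(n+6)) + (n+3)(n+6)(n²+9n-12)) / (20(2(n-2)(n+6) + (n+4)√(10(n+3)(n+6)))), the only integers n with 2 ≤ n ≤ 36 for which b(n) is an integer are n = 2 (where b(2) = 2) and n = 24 (where b(24) = 231). -/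
noncomputable def bn6 (n : ℕ) : ℝ :=
  ((n : ℝ) + 4) * (20 * Real.sqrt (10 * ((n : ℝ) + 3) * ((n : ℝ) + 6))
      + ((n : ℝ) + 3) * ((n : ℝ) + 6) * ((n : ℝ) ^ 2 + 9 * (n : ℝ) - 12))
    / (20 * (2 * ((n : ℝ) - 2) * ((n : ℝ) + 6)
      + ((n : ℝ) + 4) * Real.sqrt (10 * ((n : ℝ) + 3) * ((n : ℝ) + 6))))

lemma not_sq (k a : ℕ) (h1 : a * a < k) (h2 : k < (a + 1) * (a + 1)) : ¬ IsSquare k := by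
  rintro ⟨r, rfl⟩
  rcases le_or_gt r a with h | h
  · exact absurd (Nat.mul_le_mul h h) (by omega)
  · have h' : a + 1 ≤ r := h
    exact absurd (Nat.mul_le_mul h' h') (by omega)

lemma bn6_aux (n : ℕ) (h2 : 2 ≤ n) (hsq : ¬ IsSquare (10 * (n + 3) * (n + 6))) :
    ¬ ∃ m : ℤ, bn6 n = m := by
  rintro ⟨m, hm⟩
  have hx : (2 : ℝ) ≤ (n : ℝ) := by exact_mod_cast h2
  have hcast : (10 : ℝ) * ((n : ℝ) + 3) * ((n : ℝ) + 6) = ((10 * (n + 3) * (n + 6) : ℕ) : ℝ) := by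
    push_cast; ring
  have hirr : Irrational (Real.sqrt (10 * ((n : ℝ) + 3) * ((n : ℝ) + 6))) := by
    rw [hcast]
    exact irrational_sqrt_natCast_iff.mpr hsq
  set r : ℝ := Real.sqrt (10 * ((n : ℝ) + 3) * ((n : ℝ) + 6)) with hrdef
  have hrpos : 0 < r := Real.sqrt_pos.mpr (by nlinarith)
  have hden : 20 * (2 * ((n : ℝ) - 2) * ((n : ℝ) + 6) + ((n : ℝ) + 4) * r) > 0 := by nlinarith
  have heq : ((n : ℝ) + 4) * (20 * r + ((n : ℝ) + 3) * ((n : ℝ) + 6) * ((n : ℝ) ^ 2 + 9 * (n : ℝ) - 12))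
      = (m : ℝ) * (20 * (2 * ((n : ℝ) - 2) * ((n : ℝ) + 6) + ((n : ℝ) + 4) * r)) := by
    have := hm
    rw [bn6, div_eq_iff (ne_of_gt hden)] at this
    exact this
  set A : ℤ := 20 * (n + 4) * (1 - m) with hA
  set B : ℤ := 40 * m * ((n : ℤ) - 2) * ((n : ℤ) + 6)
      - ((n : ℤ) + 4) * ((n : ℤ) + 3) * ((n : ℤ) + 6) * ((n : ℤ) ^ 2 + 9 * (n : ℤ) - 12) with hB
  have key : (A : ℝ) * r = (B : ℝ) := by
    rw [hA, hB]
    push_cast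
    linear_combination heq
  by_cases hA0 : A = 0
  · have hm1 : m = 1 := by
      have h20 : (20 : ℤ) * ((n : ℤ) + 4) ≠ 0 := by positivity
      rw [hA] at hA0
      rcases mul_eq_zero.mp hA0 with h | h
      · exact absurd h h20
      · omega
    have hB0 : B = 0 := by
      have : (B : ℝ) = 0 := by rw [← key, hA0]; push_cast; ring
      exact_mod_cast this
    rw [hB, hm1] at hB0
    have hn2 : (2 : ℤ) ≤ (n : ℤ) := by exact_mod_cast h2
    have hpos : 0 < ((n : ℤ) + 4) * ((n : ℤ) + 3) * ((n : ℤ) ^ 2 + 9 * (n : ℤ) - 12)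
        - 40 * ((n : ℤ) - 2) := by
      nlinarith [hn2, sq_nonneg ((n : ℤ)), mul_nonneg (sub_nonneg.2 hn2) (sub_nonneg.2 hn2),
        mul_nonneg (mul_nonneg (sub_nonneg.2 hn2) (sub_nonneg.2 hn2)) (sub_nonneg.2 hn2)]
    have h6 : (0 : ℤ) < (n : ℤ) + 6 := by omega
    nlinarith [mul_pos h6 hpos, hB0]
  · exact hirr ⟨(B : ℚ) / (A : ℚ), by
      have hAr : ((A : ℚ) : ℝ) ≠ 0 := by
        simp only [ne_eq, Rat.cast_eq_zero, Int.cast_eq_zero]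
        exact hA0
      push_cast
      push_cast at hAr
      field_simp
      linarith [key]⟩

lemma bn6_val (n : ℕ) (s : ℝ) (hs : 0 ≤ s) (hsq : s ^ 2 = 10 * ((n : ℝ) + 3) * ((n : ℝ) + 6))
    : Real.sqrt (10 * ((n : ℝ) + 3) * ((n : ℝ) + 6)) = s := by
  rw [← hsq, Real.sqrt_sq hs]

lemma bn6_two : bn6 2 = 2 := by
  have h := bn6_val 2 20 (by norm_num) (by norm_num)
  rw [bn6, h]
  norm_num

lemma bn6_24 : bn6 24 = 231 := by
  have h := bn6_val 24 90 (by norm_num) (by norm_num)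
  rw [bn6, h]
  norm_num

/-- Among `2 ≤ n ≤ 36`, the bound `b_{n,6}` is an integer exactly for `n = 2`
(where it equals `2`) and `n = 24` (where it equals `231`). -/
theorem bn6_integral_cases :
    (∀ n : ℕ, 2 ≤ n → n ≤ 36 → ((∃ m : ℤ, bn6 n = m) ↔ n = 2 ∨ n = 24))
      ∧ bn6 2 = 2 ∧ bn6 24 = 231 := by
  refine ⟨?_, bn6_two, bn6_24⟩
  intro n h2 h36
  interval_cases n
  · exact iff_of_true ⟨2, by rw [bn6_two]; norm_num⟩ (Or.inl rfl)
  · exact iff_of_false (bn6_aux 3 (by norm_num) (not_sq _ 23 (by norm_num) (by norm_num))) (by omega)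
  · exact iff_of_false (bn6_aux 4 (by norm_num) (not_sq _ 26 (by norm_num) (by norm_num))) (by omega)
  · exact iff_of_false (bn6_aux 5 (by norm_num) (not_sq _ 29 (by norm_num) (by norm_num))) (by omega)
  · exact iff_of_false (bn6_aux 6 (by norm_num) (not_sq _ 32 (by norm_num) (by norm_num))) (by omega)
  · exact iff_of_false (bn6_aux 7 (by norm_num) (not_sq _ 36 (by norm_num) (by norm_num))) (by omega)
  · exact iff_of_false (bn6_aux 8 (by norm_num) (not_sq _ 39 (by norm_num) (by norm_num))) (by omega)
  · exact iff_of_false (bn6_aux 9 (by norm_num) (not_sq _ 42 (by norm_num) (by norm_num))) (by omega)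
  · exact iff_of_false (bn6_aux 10 (by norm_num) (not_sq _ 45 (by norm_num) (by norm_num))) (by omega)
  · exact iff_of_false (bn6_aux 11 (by norm_num) (not_sq _ 48 (by norm_num) (by norm_num))) (by omega)
  · exact iff_of_false (bn6_aux 12 (by norm_num) (not_sq _ 51 (by norm_num) (by norm_num))) (by omega)
  · exact iff_of_false (bn6_aux 13 (by norm_num) (not_sq _ 55 (by norm_num) (by norm_num))) (by omega)
  · exact iff_of_false (bn6_aux 14 (by norm_num) (not_sq _ 58 (by norm_num) (by norm_num))) (by omega)
  · exact iff_of_false (bn6_aux 15 (by norm_num) (not_sq _ 61 (by norm_num) (by norm_num))) (by omega)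
  · exact iff_of_false (bn6_aux 16 (by norm_num) (not_sq _ 64 (by norm_num) (by norm_num))) (by omega)
  · exact iff_of_false (bn6_aux 17 (by norm_num) (not_sq _ 67 (by norm_num) (by norm_num))) (by omega)
  · exact iff_of_false (bn6_aux 18 (by norm_num) (not_sq _ 70 (by norm_num) (by norm_num))) (by omega)
  · exact iff_of_false (bn6_aux 19 (by norm_num) (not_sq _ 74 (by norm_num) (by norm_num))) (by omega)
  · exact iff_of_false (bn6_aux 20 (by norm_num) (not_sq _ 77 (by norm_num) (by norm_num))) (by omega)
  · exact iff_of_false (bn6_aux 21 (by norm_num) (not_sq _ 80 (by norm_num) (by norm_num))) (by omega)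
  · exact iff_of_false (bn6_aux 22 (by norm_num) (not_sq _ 83 (by norm_num) (by norm_num))) (by omega)
  · exact iff_of_false (bn6_aux 23 (by norm_num) (not_sq _ 86 (by norm_num) (by norm_num))) (by omega)
  · exact iff_of_true ⟨231, by rw [bn6_24]; norm_num⟩ (Or.inr rfl)
  · exact iff_of_false (bn6_aux 25 (by norm_num) (not_sq _ 93 (by norm_num) (by norm_num))) (by omega)
  · exact iff_of_false (bn6_aux 26 (by norm_num) (not_sq _ 96 (by norm_num) (by norm_num))) (by omega)
  · exact iff_of_false (bn6_aux 27 (by norm_num) (not_sq _ 99 (by norm_num) (by norm_num))) (by omega)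
  · exact iff_of_false (bn6_aux 28 (by norm_num) (not_sq _ 102 (by norm_num) (by norm_num))) (by omega)
  · exact iff_of_false (bn6_aux 29 (by norm_num) (not_sq _ 105 (by norm_num) (by norm_num))) (by omega)
  · exact iff_of_false (bn6_aux 30 (by norm_num) (not_sq _ 108 (by norm_num) (by norm_num))) (by omega)
  · exact iff_of_false (bn6_aux 31 (by norm_num) (not_sq _ 112 (by norm_num) (by norm_num))) (by omega)
  · exact iff_of_false (bn6_aux 32 (by norm_num) (not_sq _ 115 (by norm_num) (by norm_num))) (by omega)
  · exact iff_of_false (bn6_aux 33 (by norm_num) (not_sq _ 118 (by norm_num) (by norm_num))) (by omega)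
  · exact iff_of_false (bn6_aux 34 (by norm_num) (not_sq _ 121 (by norm_num) (by norm_num))) (by omega)
  · exact iff_of_false (bn6_aux 35 (by norm_num) (not_sq _ 124 (by norm_num) (by norm_num))) (by omega)
  · exact iff_of_false (bn6_aux 36 (by norm_num) (not_sq _ 127 (by norm_num) (by norm_num))) (by omega)
end

section
/- Let Y ⊆ S^{n-1} be a finite set of unit vectors such that the inner product of any two distinct elements of Y lies in {0, α, -α} for some real α with 0 < α < 1, and suppose |Y| > 2n. Then 1/α is an integer. -/
/-!
The Gram matrix `G` of `Y` has rank at most `n`, and `A = (G - 1) / α` is an integer matrix.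
Hence `-1/α` is an eigenvalue of `A` of geometric, so also algebraic, multiplicity at least
`|Y| - n > |Y| / 2`. The minimal polynomial of `-1/α` over `ℚ` is separable, so its
`(|Y| - n)`-th power divides the characteristic polynomial of `A`, which has degree `|Y|`;
thus `-1/α` is rational, and being an algebraic integer it lies in `ℤ`.
-/

open Polynomial Module
open scoped RealInnerProductSpace

theorem minpoly_pow_rootMultiplicity_dvd {K L : Type*} [Field K] [PerfectField K] [Field L]
    [Algebra K L] {x : L} (hx : IsIntegral K x) {p : K[X]} (hp : p ≠ 0) :
    minpoly K x ^ (p.map (algebraMap K L)).rootMultiplicity x ∣ p := by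
  classical
  set f := minpoly K x
  have hf_simple : (f.map (algebraMap K L)).rootMultiplicity x ≤ 1 :=
    rootMultiplicity_le_one_of_separable
      (PerfectField.separable_of_irreducible (minpoly.irreducible hx)).map x
  suffices ∀ k ≤ (p.map (algebraMap K L)).rootMultiplicity x, f ^ k ∣ p from this _ le_rfl
  intro k
  induction k with
  | zero => simp
  | succ k ih =>
    intro hk
    obtain ⟨s, rfl⟩ := ih (by omega)
    have hs0 : s.map (algebraMap K L) ≠ 0 :=
      (Polynomial.map_ne_zero_iff (algebraMap K L).injective).mpr (right_ne_zero_of_mul hp)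
    have hfks0 : (f ^ k * s).map (algebraMap K L) ≠ 0 :=
      (Polynomial.map_ne_zero_iff (algebraMap K L).injective).mpr hp
    rw [Polynomial.map_mul, Polynomial.map_pow] at hk hfks0
    rw [rootMultiplicity_mul hfks0, ← count_roots, roots_pow, Multiset.count_nsmul,
      count_roots] at hk
    have hs_root : aeval x s = 0 := by
      rw [aeval_def, ← eval_map]
      exact (rootMultiplicity_pos hs0).mp (by nlinarith)
    obtain ⟨t, rfl⟩ := minpoly.dvd K x hs_root
    exact ⟨t, by ring⟩

theorem exists_int_eq_of_natDegree_lt_two_mul_rootMultiplicity {K : Type*} [Field K]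
    [CharZero K] {q : ℤ[X]} (hq : q.Monic) {x : K}
    (hmult : q.natDegree < 2 * (q.map (Int.castRingHom K)).rootMultiplicity x) :
    ∃ m : ℤ, x = m := by
  set d := (q.map (Int.castRingHom K)).rootMultiplicity x
  have hroot : aeval x q = 0 := by
    rw [aeval_def, ← eval_map, algebraMap_int_eq]
    exact (rootMultiplicity_pos (hq.map _).ne_zero).mp (by omega)
  have hxℤ : IsIntegral ℤ x := ⟨q, hq, by rwa [← aeval_def]⟩
  have hxℚ : IsIntegral ℚ x := hxℤ.tower_top
  have hdeg : (minpoly ℚ x).natDegree * d ≤ q.natDegree := by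
    have hdvd := minpoly_pow_rootMultiplicity_dvd hxℚ (hq.map (Int.castRingHom ℚ)).ne_zero
    rw [Polynomial.map_map, RingHom.ext_int ((algebraMap ℚ K).comp (Int.castRingHom ℚ))] at hdvd
    simpa [natDegree_pow, mul_comm, hq.natDegree_map] using
      natDegree_le_of_dvd hdvd (hq.map (Int.castRingHom ℚ)).ne_zero
  have hlinear : (minpoly ℚ x).natDegree = 1 := by
    have hpos := minpoly.natDegree_pos hxℚ
    by_contra h
    have : 2 * d ≤ (minpoly ℚ x).natDegree * d := Nat.mul_le_mul_right d (by omega)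
    omega
  obtain ⟨r, rfl⟩ := minpoly.natDegree_eq_one_iff.mp hlinear
  obtain ⟨m, rfl⟩ := IsIntegrallyClosed.isIntegral_iff.mp
    ((isIntegral_algebraMap_iff (algebraMap ℚ K).injective).mp hxℤ)
  exact ⟨m, by simp⟩

namespace Matrix

theorem card_sub_rank_le_rootMultiplicity_charpoly {K n : Type*} [Field K] [Fintype n]
    [DecidableEq n] (A : Matrix n n K) (μ : K) :
    Fintype.card n - (A - μ • 1).rank ≤ A.charpoly.rootMultiplicity μ := by
  have hker : Module.End.eigenspace (toLin' A) μ = LinearMap.ker (toLin' (A - μ • 1)) := by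
    rw [Module.End.eigenspace_def, map_sub, map_smul, toLin'_one, Module.End.one_eq_id]
  have hgeom := LinearMap.finrank_eigenspace_le (toLin' A) μ
  have hnullity := (toLin' (A - μ • 1)).finrank_range_add_finrank_ker
  rw [hker, charpoly_toLin'] at hgeom
  rw [finrank_fintype_fun_eq_card] at hnullity
  rw [rank, ← toLin'_apply']
  omega

theorem rank_gram_le_finrank {𝕜 E ι : Type*} [RCLike 𝕜] [NormedAddCommGroup E]
    [InnerProductSpace 𝕜 E] [FiniteDimensional 𝕜 E] [Fintype ι] (v : ι → E) :
    (gram 𝕜 v).rank ≤ finrank 𝕜 E := by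
  rw [gram_eq_conjTranspose_mul (stdOrthonormalBasis 𝕜 E)]
  exact (rank_mul_le_right _ _).trans ((rank_le_card_height _).trans (by simp))

theorem exists_int_matrix_eq_inv_smul_gram_sub_one {E ι : Type*} [NormedAddCommGroup E]
    [InnerProductSpace ℝ E] [DecidableEq ι] {v : ι → E} (hv : ∀ i, ‖v i‖ = 1) {α : ℝ}
    (hα : α ≠ 0) (hinner : ∀ i j, i ≠ j → ⟪v i, v j⟫ ∈ ({0, α, -α} : Set ℝ)) :
    ∃ Z : Matrix ι ι ℤ, α⁻¹ • (gram ℝ v - 1) = Z.map (Int.castRingHom ℝ) := by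
  have hentry : ∀ i j, ∃ z : ℤ, α⁻¹ * (⟪v i, v j⟫ - (1 : Matrix ι ι ℝ) i j) = z := by
    intro i j
    by_cases hij : i = j
    · subst hij
      exact ⟨0, by simp [hv i]⟩
    · rw [one_apply_ne hij, sub_zero]
      rcases hinner i j hij with h | h | h <;> rw [h]
      · exact ⟨0, by simp⟩
      · exact ⟨1, by simp [hα]⟩
      · exact ⟨-1, by simp [hα]⟩
  choose Z hZ using hentry
  exact ⟨of Z, by ext i j; simp [hZ]⟩

end Matrix

theorem three_distance_integrality_general {n : ℕ}
    (Y : Finset (EuclideanSpace ℝ (Fin n)))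
    (hYsphere : ∀ x ∈ Y, ‖x‖ = 1)
    (α : ℝ) (hα0 : 0 < α)
    (hinner : ∀ x ∈ Y, ∀ y ∈ Y, x ≠ y → ⟪x, y⟫ ∈ ({0, α, -α} : Set ℝ))
    (hcard : 2 * n < Y.card) :
    ∃ m : ℤ, (1 / α : ℝ) = m := by
  classical
  set v : Y → EuclideanSpace ℝ (Fin n) := (↑)
  obtain ⟨Z, hZ⟩ := Matrix.exists_int_matrix_eq_inv_smul_gram_sub_one (v := v)
    (fun i ↦ hYsphere i i.2) hα0.ne'
    (fun i j hij ↦ hinner i i.2 j j.2 (Subtype.coe_ne_coe.mpr hij))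
  have hrank : (Z.map (Int.castRingHom ℝ) - (-α⁻¹) • 1).rank ≤ n := by
    rw [← hZ, show α⁻¹ • (Matrix.gram ℝ v - 1) - (-α⁻¹) • 1 = α⁻¹ • Matrix.gram ℝ v by
      simp [smul_sub], Matrix.rank_smul_of_mem_nonZeroDivisors _
      (mem_nonZeroDivisors_of_ne_zero (inv_ne_zero hα0.ne'))]
    simpa using Matrix.rank_gram_le_finrank (𝕜 := ℝ) v
  have hmult := (Z.map (Int.castRingHom ℝ)).card_sub_rank_le_rootMultiplicity_charpoly (-α⁻¹)
  rw [Matrix.charpoly_map, Fintype.card_coe] at hmult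
  obtain ⟨m, hm⟩ := exists_int_eq_of_natDegree_lt_two_mul_rootMultiplicity Z.charpoly_monic
    (x := -α⁻¹) (by rw [Matrix.charpoly_natDegree_eq_dim, Fintype.card_coe]; omega)
  exact ⟨-m, by rw [one_div, Int.cast_neg, ← hm, neg_neg]⟩

/-- If `Y` is a set of unit vectors in `ℝⁿ` whose pairwise inner products lie in
`{0, α, -α}` with `0 < α < 1` and `|Y| > 2n`, then `1/α` is an integer. -/
theorem three_distance_integrality {n : ℕ}
    (Y : Finset (EuclideanSpace ℝ (Fin n)))
    (hYsphere : ∀ x ∈ Y, ‖x‖ = 1)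
    (α : ℝ) (hα0 : 0 < α) (hα1 : α < 1)
    (hinner : ∀ x ∈ Y, ∀ y ∈ Y, x ≠ y → ⟪x, y⟫ ∈ ({0, α, -α} : Set ℝ))
    (hcard : 2 * n < Y.card) :
    ∃ m : ℤ, (1 / α : ℝ) = m :=
  three_distance_integrality_general Y hYsphere α hα0 hinner hcard
end

section
/- For integers n ≥ 2, if n(n-4)(n+6)(n+10) = u² for some integer u ≥ 0, then n = 4 or n = 6. -/
lemma no_sq_between (u k c : ℤ) (hu : 0 ≤ u) (hc : u ^ 2 = c)
    (hk : 0 ≤ k) (h1 : k ^ 2 < c) (h2 : c < (k + 1) ^ 2) : False := by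
  rcases le_or_gt u k with h' | h' <;> nlinarith

theorem square_product_86 (n : ℤ) (hn : 2 ≤ n) (u : ℤ) (hu : 0 ≤ u)
    (h : n * (n - 4) * (n + 6) * (n + 10) = u ^ 2) :
    n = 4 ∨ n = 6 := by
  have hm : u ^ 2 = (n ^ 2 + 6 * n - 20) ^ 2 - 400 := by ring_nf; nlinarith [h]
  rcases le_or_gt n 12 with h12 | h12
  · interval_cases n
    · nlinarith
    · nlinarith
    · exact Or.inl rfl
    · exact absurd hm (fun hc => no_sq_between u 28 825 hu (by linarith) (by norm_num) (by norm_num) (by norm_num))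
    · exact Or.inr rfl
    · exact absurd hm (fun hc => no_sq_between u 68 4641 hu (by linarith) (by norm_num) (by norm_num) (by norm_num))
    · exact absurd hm (fun hc => no_sq_between u 89 8064 hu (by linarith) (by norm_num) (by norm_num) (by norm_num))
    · exact absurd hm (fun hc => no_sq_between u 113 12825 hu (by linarith) (by norm_num) (by norm_num) (by norm_num))
    · exact absurd hm (fun hc => no_sq_between u 138 19200 hu (by linarith) (by norm_num) (by norm_num) (by norm_num))
    · exact absurd hm (fun hc => no_sq_between u 165 27489 hu (by linarith) (by norm_num) (by norm_num) (by norm_num))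
    · exact absurd hm (fun hc => no_sq_between u 194 38016 hu (by linarith) (by norm_num) (by norm_num) (by norm_num))
  · exfalso
    set m : ℤ := n ^ 2 + 6 * n - 20 with hmdef
    have hm227 : 227 ≤ m := by nlinarith
    have hum : u < m := by nlinarith
    have : u ^ 2 ≤ (m - 1) ^ 2 := by nlinarith
    nlinarith
end
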